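/- Let 𝔽 be a field, t ∈ 𝔽^{n_1}⊗⋯⊗𝔽^{n_k}, and θ a probability distribution on [k]. Then ρ^θ(t) ≤ Σ_{i=1}^k θ(i)·log₂ n_i − (2/ln 2)·(min_i θ(i))·instab(t)², where ρ^θ is the logarithmic upper support functional and instab(t) is the instability of t. -/

import Mathlib

open scoped BigOperators
open scoped Classical
open scoped ComplexOrder

noncomputable section

namespace CVZ

variable {k : ℕ}

/-- A concrete `k`-tensor over `F` with index types `I i`: the coefficient array
(in the standard bases) of a multilinear map `V₁ × ⋯ × V_k → F` with `dim V_i = |I i|`. -/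
abbrev Tensor (F : Type*) (I : Fin k → Type*) : Type _ := (∀ i, I i) → F

section Basic

variable {F : Type*} [Field F] {I J : Fin k → Type*}
  [∀ i, Fintype (I i)] [∀ i, DecidableEq (I i)]
  [∀ i, Fintype (J i)] [∀ i, DecidableEq (J i)]

/-- Coefficient array of the restriction `f ∘ (A₁, …, A_k)`, where `A_i : W_i → V_i`
is given by the matrix `A i`. -/
def restrictBy (A : ∀ i, Matrix (I i) (J i) F) (t : Tensor F I) : Tensor F J :=
  fun β => ∑ α : ∀ i, I i, (∏ i, A i (α i) (β i)) * t α

/-- `t` restricts to `s`. -/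
def Restricts (t : Tensor F I) (s : Tensor F J) : Prop :=
  ∃ A : ∀ i, Matrix (I i) (J i) F, restrictBy A t = s

/-- A choice of bases of the spaces `V_i`, encoded as a tuple of invertible matrices. -/
def IsBasisTuple (B : ∀ i, Matrix (I i) (I i) F) : Prop := ∀ i, IsUnit (B i)

/-- Support of a tensor (with respect to the standard bases). -/
def supp (t : Tensor F I) : Set (∀ i, I i) := {α | t α ≠ 0}

end Basic

section Entropy

/-- A probability distribution on the finite set `X`. -/
def IsProbDist {X : Type*} [Fintype X] (P : X → ℝ) : Prop :=
  (∀ x, 0 ≤ P x) ∧ ∑ x, P x = 1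

/-- Base-2 Shannon entropy. -/
def H2 {X : Type*} [Fintype X] (P : X → ℝ) : ℝ :=
  ∑ x, -(P x * Real.logb 2 (P x))

variable {I : Fin k → Type*} [∀ i, Fintype (I i)] [∀ i, DecidableEq (I i)]

/-- The `i`-th marginal of a distribution on a product set. -/
def marg (P : (∀ i, I i) → ℝ) (i : Fin k) : I i → ℝ :=
  fun a => ∑ α : ∀ i, I i, if α i = a then P α else 0

/-- `H_θ(P)`, the `θ`-weighted average of the marginal entropies. -/
def Hw (θ : Fin k → ℝ) (P : (∀ i, I i) → ℝ) : ℝ :=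
  ∑ i, θ i * H2 (marg P i)

/-- `H_θ(Φ)`, the supremum of `H_θ(P)` over distributions `P` supported on `Φ`. -/
def HwSet (θ : Fin k → ℝ) (Φ : Set (∀ i, I i)) : ℝ :=
  sSup {h | ∃ P : (∀ i, I i) → ℝ, IsProbDist P ∧ (∀ α, P α ≠ 0 → α ∈ Φ) ∧ h = Hw θ P}

/-- Maximal points of a subset of the product order. -/
def maxPoints [∀ i, LinearOrder (I i)] (Φ : Set (∀ i, I i)) : Set (∀ i, I i) :=
  {α | α ∈ Φ ∧ ∀ β ∈ Φ, ¬ α < β}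

end Entropy

section SuppFunc

variable {F : Type*} [Field F] {I : Fin k → Type*} [∀ i, Fintype (I i)] [∀ i, DecidableEq (I i)]

/-- The logarithmic Strassen upper support functional `ρ^θ`. -/
def rhoUpper (θ : Fin k → ℝ) (t : Tensor F I) : ℝ :=
  sInf {h | ∃ B : ∀ i, Matrix (I i) (I i) F, IsBasisTuple B ∧
    h = HwSet θ (supp (restrictBy B t))}

/-- The Strassen upper support functional `ζ^θ`. -/
def zetaUpper (θ : Fin k → ℝ) (t : Tensor F I) : ℝ :=
  if t = 0 then 0 else (2 : ℝ) ^ rhoUpper θ t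

/-- The logarithmic Strassen lower support functional `ρ_θ`. -/
def rhoLower [∀ i, LinearOrder (I i)] (θ : Fin k → ℝ) (t : Tensor F I) : ℝ :=
  sSup {h | ∃ B : ∀ i, Matrix (I i) (I i) F, IsBasisTuple B ∧
    h = HwSet θ (maxPoints (supp (restrictBy B t)))}

/-- The Strassen lower support functional `ζ_θ`. -/
def zetaLower [∀ i, LinearOrder (I i)] (θ : Fin k → ℝ) (t : Tensor F I) : ℝ :=
  if t = 0 then 0 else (2 : ℝ) ^ rhoLower θ t

/-- The instability of a tensor. -/
def instab (t : Tensor F I) : ℝ :=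
  sSup {ε : ℝ | 0 ≤ ε ∧ ∃ B : ∀ i, Matrix (I i) (I i) F, IsBasisTuple B ∧
    ∃ w : ∀ i, I i → ℝ, (∀ i x, 0 ≤ w i x) ∧ (∀ i, ∃ x, w i x ≠ 0) ∧
      ∀ a ∈ supp (restrictBy B t), ∑ i, w i (a i) ≤
        ∑ i, ((∑ x : I i, w i x) / (Fintype.card (I i) : ℝ) - ε * ⨆ x : I i, w i x)}

end SuppFunc

section Ops

variable {F : Type*} [Field F]

/-- The unit tensor `⟨r⟩`. -/
def unitTensor (F : Type*) [Field F] (k r : ℕ) : Tensor F (fun _ : Fin k => Fin r) :=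
  fun α => if ∀ i j : Fin k, α i = α j then 1 else 0

variable {n m : Fin k → ℕ}

/-- Direct sum of two tensors, with the concatenated (naturally ordered) bases. -/
def dirSumFin (s : Tensor F fun i => Fin (n i)) (t : Tensor F fun i => Fin (m i)) :
    Tensor F fun i => Fin (n i + m i) :=
  fun α =>
    (if h : ∀ i, (α i : ℕ) < n i then s (fun i => ⟨(α i : ℕ), h i⟩) else 0) +
    (if h : ∀ i, n i ≤ (α i : ℕ) then
      t (fun i => ⟨(α i : ℕ) - n i, by have h1 := (α i).isLt; have h2 := h i; omega⟩) else 0)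

/-- Tensor (Kronecker) product of two tensors, with the product bases ordered naturally. -/
def tensMulFin (s : Tensor F fun i => Fin (n i)) (t : Tensor F fun i => Fin (m i)) :
    Tensor F fun i => Fin (n i * m i) :=
  fun α =>
    s (fun i => ⟨(α i : ℕ) / m i, by
      have h := (α i).isLt
      exact Nat.div_lt_of_lt_mul (lt_of_lt_of_le h (Nat.mul_comm (n i) (m i)).le)⟩) *
    t (fun i => ⟨(α i : ℕ) % m i, by
      have h := (α i).isLt
      have hpos : 0 < n i * m i := Nat.lt_of_le_of_lt (Nat.zero_le _) h
      have hm : 0 < m i := by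
        rcases Nat.eq_zero_or_pos (m i) with h0 | h0
        · simp [h0] at hpos
        · exact h0
      exact Nat.mod_lt _ hm⟩)

/-- The `N`-th tensor power of a tensor (grouping the legs into `k` groups). -/
def tpow {I : Fin k → Type*} (t : Tensor F I) (N : ℕ) : Tensor F fun i => Fin N → I i :=
  fun α => ∏ j : Fin N, t fun i => α i j

end Ops

section Subrank

variable {F : Type*} [Field F] {I : Fin k → Type*} [∀ i, Fintype (I i)] [∀ i, DecidableEq (I i)]

/-- The subrank `Q(t)` of a tensor: the largest `r` with `⟨r⟩ ≤ t`. -/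
def Qtensor (t : Tensor F I) : ℕ :=
  sSup {r : ℕ | Restricts t (unitTensor F k r)}

/-- A slice: a tensor of the form `v ⊗ w` with `v` in the `j`-th leg. -/
def IsSlice (s : Tensor F I) : Prop :=
  ∃ (j : Fin k) (v : I j → F) (w : (∀ i : {i : Fin k // i ≠ j}, I i.1) → F),
    ∀ α, s α = v (α j) * w (fun i => α i.1)

/-- The slice rank of a tensor. -/
def sliceRank (t : Tensor F I) : ℕ :=
  sInf {r : ℕ | ∃ c : Fin r → Tensor F I, (∀ a, IsSlice (c a)) ∧ t = ∑ a, c a}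

end Subrank

section Combinatorial

variable {I : Fin k → Type*}

/-- A diagonal: any two distinct elements differ in all coordinates. -/
def IsDiagonal (D : Set (∀ i, I i)) : Prop :=
  ∀ a ∈ D, ∀ b ∈ D, a ≠ b → ∀ i, a i ≠ b i

/-- The `i`-th projection of a set of tuples. -/
def projSet (D : Set (∀ i, I i)) (i : Fin k) : Set (I i) := {x | ∃ a ∈ D, a i = x}

/-- A free diagonal in `Φ`: a diagonal `D` with `D = Φ ∩ (D₁ × ⋯ × D_k)`. -/
def IsFreeDiagonal (D Φ : Set (∀ i, I i)) : Prop :=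
  IsDiagonal D ∧ D = Φ ∩ {a | ∀ i, a i ∈ projSet D i}

/-- The (combinatorial) subrank of a set: the maximal size of a free diagonal. -/
def Qset (Φ : Set (∀ i, I i)) : ℕ :=
  sSup {r : ℕ | ∃ D : Set (∀ i, I i), IsFreeDiagonal D Φ ∧ D.ncard = r}

/-- The `N`-fold coordinatewise power of a set of tuples. -/
def setPow (Φ : Set (∀ i, I i)) (N : ℕ) : Set (∀ i, Fin N → I i) :=
  {α | ∀ j : Fin N, (fun i => α i j) ∈ Φ}

/-- A tight set. -/
def TightSet (Φ : Set (∀ i, I i)) : Prop :=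
  ∃ u : ∀ i, I i → ℤ, (∀ i, Function.Injective (u i)) ∧ ∀ α ∈ Φ, ∑ i, u i (α i) = 0

/-- `Φ` is a combinatorial degeneration of `Ψ` (written `Ψ ⊵ Φ`). -/
def CombDegen (Ψ Φ : Set (∀ i, I i)) : Prop :=
  Φ ⊆ Ψ ∧ ∃ u : ∀ i, I i → ℤ,
    (∀ α ∈ Φ, ∑ i, u i (α i) = 0) ∧ ∀ α ∈ Ψ, α ∉ Φ → 0 < ∑ i, u i (α i)

end Combinatorial

/-- A tight tensor: some basis tuple gives a tight support. -/
def TightTensor {F : Type*} [Field F] {I : Fin k → Type*} [∀ i, Fintype (I i)]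
    [∀ i, DecidableEq (I i)] (t : Tensor F I) : Prop :=
  ∃ B : ∀ i, Matrix (I i) (I i) F, IsBasisTuple B ∧ TightSet (supp (restrictBy B t))

/-- A complete (decreasing) flag of subspaces, `W 0 = ⊤` and `dim (W j) = dim V − j`. -/
def IsCompleteFlag (F : Type*) [Field F] {V : Type*} [AddCommGroup V] [Module F V]
    (W : ℕ → Submodule F V) : Prop :=
  Antitone W ∧ W 0 = ⊤ ∧ ∀ j : ℕ, Module.finrank F (W j) = Module.finrank F V - j

/-- Evaluation of (the multilinear map associated with) `t` at a tuple of vectors. -/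
def eval {F : Type*} [Field F] {I : Fin k → Type*} [∀ i, Fintype (I i)] [∀ i, DecidableEq (I i)]
    (t : Tensor F I) (v : ∀ i, I i → F) : F :=
  ∑ α : ∀ i, I i, (∏ i, v i (α i)) * t α

/-- The support of `t` with respect to a tuple of complete flags. -/
def suppFlag {F : Type*} [Field F] {n : Fin k → ℕ} (t : Tensor F fun i => Fin (n i))
    (W : ∀ i, ℕ → Submodule F (Fin (n i) → F)) : Set (∀ i, Fin (n i)) :=
  {α | ∃ v : ∀ i, Fin (n i) → F, (∀ i, v i ∈ W i (α i : ℕ)) ∧ eval t v ≠ 0}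

section Quantum

variable {I : Fin k → Type*} [∀ i, Fintype (I i)] [∀ i, DecidableEq (I i)]

/-- Von Neumann entropy (base 2) of a Hermitian matrix. -/
def vnEntropy {d : Type*} [Fintype d] [DecidableEq d] (ρ : Matrix d d ℂ) : ℝ :=
  if h : ρ.IsHermitian then ∑ x, -(h.eigenvalues x * Real.logb 2 (h.eigenvalues x)) else 0

/-- The `j`-th marginal (reduced density matrix) of the pure state `|t⟩⟨t| / ⟨t|t⟩`. -/
def margMat (t : Tensor ℂ I) (j : Fin k) : Matrix (I j) (I j) ℂ :=
  fun a b =>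
    (∑ α : ∀ i, I i, ∑ β : ∀ i, I i,
      if α j = a ∧ β j = b ∧ (∀ i, i ≠ j → α i = β i) then t α * star (t β) else 0) /
    ∑ α : ∀ i, I i, t α * star (t α)

/-- The logarithmic lower quantum functional `E_θ` for `θ` a distribution on `[k]`. -/
def Ewq (θ : Fin k → ℝ) (t : Tensor ℂ I) : ℝ :=
  sSup {h | ∃ A : ∀ i, Matrix (I i) (I i) ℂ, IsBasisTuple A ∧
    h = ∑ j, θ j * vnEntropy (margMat (restrictBy A t) j)}

/-- The marginal (reduced density matrix) on the legs in `S` of the pure state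
`|t⟩⟨t| / ⟨t|t⟩`. -/
def margMatSet (t : Tensor ℂ I) (S : Finset (Fin k)) :
    Matrix (∀ i : {x : Fin k // x ∈ S}, I i.1) (∀ i : {x : Fin k // x ∈ S}, I i.1) ℂ :=
  fun a b =>
    (∑ α : ∀ i, I i, ∑ β : ∀ i, I i,
      if (∀ (i : Fin k) (hi : i ∈ S), α i = a ⟨i, hi⟩ ∧ β i = b ⟨i, hi⟩) ∧
         (∀ i, i ∉ S → α i = β i)
      then t α * star (t β) else 0) /
    ∑ α : ∀ i, I i, t α * star (t α)

/-- A probability distribution on the bipartitions `{S, S̄}` of `[k]` (encoded by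
choosing a representative `S` for each bipartition occurring in the support). -/
def IsBipDist (θ : Finset (Fin k) → ℝ) : Prop :=
  (∀ S, 0 ≤ θ S) ∧ (∀ S, θ S ≠ 0 → S.Nonempty ∧ Sᶜ.Nonempty) ∧
    ∑ S : Finset (Fin k), θ S = 1

/-- The logarithmic lower quantum functional `E_θ` for `θ` a distribution on bipartitions. -/
def EwqBip (θ : Finset (Fin k) → ℝ) (t : Tensor ℂ I) : ℝ :=
  sSup {h | ∃ A : ∀ i, Matrix (I i) (I i) ℂ, IsBasisTuple A ∧
    h = ∑ S : Finset (Fin k), θ S * vnEntropy (margMatSet (restrictBy A t) S)}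

/-- The lower quantum functional `F_θ`. -/
def FwqBip (θ : Finset (Fin k) → ℝ) (t : Tensor ℂ I) : ℝ :=
  if t = 0 then 0 else (2 : ℝ) ^ EwqBip θ t

/-- Degeneration: `t` lies in the closure of the `GL × ⋯ × GL`-orbit of `s`. -/
def Degen (s t : Tensor ℂ I) : Prop :=
  t ∈ closure {u : Tensor ℂ I | ∃ A : ∀ i, Matrix (I i) (I i) ℂ,
    IsBasisTuple A ∧ restrictBy A s = u}

end Quantum

/-- Trace norm of a complex matrix: `Tr √(AᴴA)`. -/
def traceNorm {d : Type*} [Fintype d] [DecidableEq d] (A : Matrix d d ℂ) : ℝ :=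
  (((Matrix.posSemidef_conjTranspose_mul_self A).isHermitian.eigenvectorUnitary.1 *
      Matrix.diagonal (((↑) : ℝ → ℂ) ∘ Real.sqrt ∘
        (Matrix.posSemidef_conjTranspose_mul_self A).isHermitian.eigenvalues) *
      (star (Matrix.posSemidef_conjTranspose_mul_self A).isHermitian.eigenvectorUnitary :
        Matrix d d ℂ)).trace).re

/-- `conjIter ρ X j = X_j ⋯ X_2 X_1 ρ X_1 X_2 ⋯ X_j`. -/
def conjIter {d : Type*} [Fintype d] (ρ : Matrix d d ℂ) {n : ℕ}
    (X : Fin n → Matrix d d ℂ) : ℕ → Matrix d d ℂ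
  | 0 => ρ
  | (j + 1) => if h : j < n then X ⟨j, h⟩ * conjIter ρ X j * X ⟨j, h⟩ else conjIter ρ X j

/-- A tricolored sum-free set in `G × G × G`. -/
def IsTriColoredSumFree {G : Type*} [AddCommGroup G] (Γ : Set (G × G × G)) : Prop :=
  (∀ a ∈ Γ, ∀ b ∈ Γ, a ≠ b → a.1 ≠ b.1 ∧ a.2.1 ≠ b.2.1 ∧ a.2.2 ≠ b.2.2) ∧
  ∀ x y z : G, (∃ a ∈ Γ, a.1 = x) → (∃ a ∈ Γ, a.2.1 = y) → (∃ a ∈ Γ, a.2.2 = z) →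
    (x + y + z = 0 ↔ (x, y, z) ∈ Γ)

/-- The maximal size `s₃(G)` of a tricolored sum-free set in `G × G × G`. -/
def s3 (G : Type*) [AddCommGroup G] : ℕ :=
  sSup {r : ℕ | ∃ Γ : Set (G × G × G), IsTriColoredSumFree Γ ∧ Γ.ncard = r}

/-- Binary entropy function (base 2), with the convention `0 · log 0 = 0`. -/
def binH (p : ℝ) : ℝ := -(p * Real.logb 2 p) - (1 - p) * Real.logb 2 (1 - p)

/-!
Suppose the weights `w` witness `ε`-instability of the support `Φ` of `t` in some basis, and let
`P` be a distribution on `Φ`. Averaging the defining inequality over `P` shows that the expected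
weight `∑ᵢ 𝔼[wᵢ(aᵢ)]` falls short of `∑ᵢ mean wᵢ` by at least `ε ∑ᵢ max wᵢ`, whereas the
marginal `Pᵢ` can only lower `𝔼[wᵢ]` below `mean wᵢ` by `max wᵢ · δᵢ`, with `δᵢ` the total
variation distance from `Pᵢ` to uniform. Hence `δⱼ ≥ ε` for some `j`, and Pinsker's inequality
`H(Pⱼ) ≤ log₂ nⱼ - (2 / ln 2) δⱼ²` gives `H_θ(P) ≤ ∑ θᵢ log₂ nᵢ - (2 / ln 2) θⱼ ε²`.
Pinsker's inequality itself follows from the pointwise bound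
`3 (x - 1)² ≤ (2x + 4)(x ln x - x + 1)` and Cauchy–Schwarz.
-/

section RealInequalities

open Real InformationTheory

lemma monotoneOn_add_one_mul_log_sub_two_mul :
    MonotoneOn (fun x : ℝ => (x + 1) * log x - 2 * (x - 1)) (Set.Ioi 0) := by
  have hderiv : ∀ x ∈ Set.Ioi (0 : ℝ),
      HasDerivAt (fun x : ℝ => (x + 1) * log x - 2 * (x - 1)) (log x + x⁻¹ - 1) x := by
    intro x hx
    have hx0 : x ≠ 0 := ne_of_gt hx
    refine ((((hasDerivAt_id' x).add_const 1).fun_mul (hasDerivAt_log hx0)).fun_sub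
      (((hasDerivAt_id' x).sub_const 1).const_mul 2)).congr_deriv ?_
    field_simp
    ring
  refine monotoneOn_of_hasDerivWithinAt_nonneg (convex_Ioi 0) (f' := fun x => log x + x⁻¹ - 1)
    (fun x hx => (hderiv x hx).continuousAt.continuousWithinAt) ?_ ?_ <;>
    simp only [interior_Ioi]
  · exact fun x hx => (hderiv x hx).hasDerivWithinAt
  · intro x hx
    linarith [one_sub_inv_le_log_of_pos (Set.mem_Ioi.mp hx)]

lemma three_mul_sq_sub_one_le_mul_klFun {x : ℝ} (hx : 0 ≤ x) :
    3 * (x - 1) ^ 2 ≤ (2 * x + 4) * klFun x := by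
  set g : ℝ → ℝ := fun x => (2 * x + 4) * klFun x - 3 * (x - 1) ^ 2
  set φ : ℝ → ℝ := fun x => (x + 1) * log x - 2 * (x - 1)
  have hderiv : ∀ y, 0 < y → HasDerivAt g (4 * φ y) y := by
    intro y hy
    refine (((((hasDerivAt_id' y).const_mul 2).add_const 4).fun_mul
      (hasDerivAt_klFun (ne_of_gt hy))).fun_sub
      ((((hasDerivAt_id' y).sub_const 1).fun_pow 2).const_mul 3)).congr_deriv ?_
    simp only [φ, klFun_apply]
    ring
  have hg : Continuous g := by fun_prop
  have hφ : MonotoneOn φ (Set.Ioi 0) := monotoneOn_add_one_mul_log_sub_two_mul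
  have hφ1 : φ 1 = 0 := by simp [φ]
  suffices 0 ≤ g x by simp only [g] at this; linarith
  have hg1 : g 1 = 0 := by simp [g, klFun_one]
  rcases le_total 1 x with h1 | h1
  · have hmono : MonotoneOn g (Set.Ici 1) := by
      refine monotoneOn_of_hasDerivWithinAt_nonneg (convex_Ici 1) (f' := fun y => 4 * φ y)
        hg.continuousOn ?_ ?_ <;>
        simp only [interior_Ici]
      · exact fun y hy => (hderiv y (zero_lt_one.trans hy)).hasDerivWithinAt
      · intro y hy
        have := hφ (Set.mem_Ioi.mpr zero_lt_one) (Set.mem_Ioi.mpr (zero_lt_one.trans hy)) hy.le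
        linarith
    simpa [hg1] using hmono Set.self_mem_Ici h1 h1
  · have hanti : AntitoneOn g (Set.Icc 0 1) := by
      refine antitoneOn_of_hasDerivWithinAt_nonpos (convex_Icc 0 1) (f' := fun y => 4 * φ y)
        hg.continuousOn ?_ ?_ <;>
        simp only [interior_Icc]
      · exact fun y hy => (hderiv y hy.1).hasDerivWithinAt
      · intro y hy
        have := hφ (Set.mem_Ioi.mpr hy.1) (Set.mem_Ioi.mpr zero_lt_one) hy.2.le
        linarith
    simpa [hg1] using hanti ⟨hx, h1⟩ (Set.right_mem_Icc.mpr zero_le_one) h1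

lemma three_mul_sq_sub_div_le_mul_klFun {p q : ℝ} (hp : 0 ≤ p) (hq : 0 < q) :
    3 * (p - q) ^ 2 / (2 * p + 4 * q) ≤ q * klFun (p / q) := by
  have h := three_mul_sq_sub_one_le_mul_klFun (div_nonneg hp hq.le)
  rw [div_le_iff₀ (by positivity)]
  have hp' : p = q * (p / q) := by field_simp
  calc 3 * (p - q) ^ 2 = q ^ 2 * (3 * (p / q - 1) ^ 2) := by rw [hp']; field_simp
    _ ≤ q ^ 2 * ((2 * (p / q) + 4) * klFun (p / q)) := by gcongr
    _ = q * klFun (p / q) * (2 * p + 4 * q) := by rw [hp']; field_simp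

lemma mul_sq_csSup_le {S : Set ℝ} (hS : S.Nonempty) (hS0 : ∀ x ∈ S, 0 ≤ x) {c D : ℝ}
    (hc : 0 ≤ c) (h : ∀ x ∈ S, c * x ^ 2 ≤ D) : c * sSup S ^ 2 ≤ D := by
  obtain ⟨x₀, hx₀⟩ := hS
  have hD : 0 ≤ D := (mul_nonneg hc (sq_nonneg x₀)).trans (h x₀ hx₀)
  by_cases hbdd : BddAbove S
  swap
  · simpa [Real.sSup_of_not_bddAbove hbdd] using hD
  rcases hc.eq_or_lt with rfl | hc
  · simpa using hD
  have hsup : sSup S ≤ √(D / c) :=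
    csSup_le ⟨x₀, hx₀⟩ fun x hx => Real.le_sqrt_of_sq_le ((le_div_iff₀' hc).mpr (h x hx))
  have hsup0 : 0 ≤ sSup S := (hS0 x₀ hx₀).trans (le_csSup hbdd hx₀)
  calc c * sSup S ^ 2 ≤ c * (D / c) := by
        gcongr
        exact (Real.le_sqrt hsup0 (div_nonneg hD hc.le)).mp hsup
    _ = D := mul_div_cancel₀ _ hc.ne'

end RealInequalities

section FiniteDistributions

open Real InformationTheory

variable {X : Type*} [Fintype X]

/-- The total variation distance `½ ‖Q - U‖₁` from a distribution `Q` to the uniform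
distribution `U` (both sums `∑ (Q - U)⁺` and `∑ (U - Q)⁺` equal it when `∑ Q = 1`). -/
def tvDistToUniform (Q : X → ℝ) : ℝ :=
  ∑ x, max ((Fintype.card X : ℝ)⁻¹ - Q x) 0

lemma IsProbDist.nonempty {P : X → ℝ} (hP : IsProbDist P) : Nonempty X := by
  by_contra h
  rw [not_nonempty_iff] at h
  simpa using hP.2

lemma IsProbDist.le_one {P : X → ℝ} (hP : IsProbDist P) (x : X) : P x ≤ 1 :=
  hP.2 ▸ Finset.single_le_sum (fun y _ => hP.1 y) (Finset.mem_univ x)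

lemma isProbDist_single [DecidableEq X] (a : X) :
    IsProbDist (Pi.single a (1 : ℝ)) := by
  refine ⟨fun x => ?_, by simp⟩
  rcases eq_or_ne x a with rfl | h
  · simp
  · simp [Pi.single_eq_of_ne h]

lemma H2_eq_sum_negMulLog (P : X → ℝ) : H2 P = (∑ x, negMulLog (P x)) / log 2 := by
  rw [H2, Finset.sum_div]
  congr 1 with x
  rw [negMulLog, logb]
  ring

lemma IsProbDist.H2_nonneg {P : X → ℝ} (hP : IsProbDist P) : 0 ≤ H2 P := by
  rw [H2_eq_sum_negMulLog]
  exact div_nonneg (Finset.sum_nonneg fun x _ => negMulLog_nonneg (hP.1 x) (hP.le_one x))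
    (log_nonneg one_le_two)

/-- Pinsker's inequality against the uniform distribution. -/
lemma IsProbDist.H2_le_logb_card_sub_tvDistToUniform_sq {P : X → ℝ} (hP : IsProbDist P) :
    H2 P ≤ logb 2 (Fintype.card X) - 2 / log 2 * tvDistToUniform P ^ 2 := by
  have := hP.nonempty
  obtain ⟨hP0, hP1⟩ := hP
  set N : ℝ := (Fintype.card X : ℝ)
  set q : ℝ := N⁻¹
  set δ := tvDistToUniform P
  have hN : 0 < N := Nat.cast_pos.mpr Fintype.card_pos
  have hq : 0 < q := inv_pos.mpr hN
  have hsum_q : ∑ _x : X, q = 1 := by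
    rw [Finset.sum_const, Finset.card_univ, nsmul_eq_mul, mul_inv_cancel₀ hN.ne']
  have hKL : ∑ x, q * klFun (P x / q) = log N - ∑ x, negMulLog (P x) := by
    have hterm : ∀ x, q * klFun (P x / q) = -negMulLog (P x) + P x * log N + (q - P x) := by
      intro x
      rcases (hP0 x).eq_or_lt with h0 | h0
      · simp [← h0, klFun_zero]
      · rw [klFun_apply, negMulLog, div_eq_mul_inv, inv_inv, log_mul h0.ne' hN.ne']
        linear_combination (P x * log (P x) + P x * log N - P x) * inv_mul_cancel₀ hN.ne'
    simp only [hterm, Finset.sum_add_distrib, Finset.sum_sub_distrib, Finset.sum_neg_distrib,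
      ← Finset.sum_mul, hP1, hsum_q]
    ring
  have hL1 : ∑ x, |P x - q| = 2 * δ := by
    have habs : ∀ x, |P x - q| = (P x - q) + 2 * max (q - P x) 0 := by
      intro x
      rcases le_total (P x) q with h | h
      · rw [abs_of_nonpos (by linarith), max_eq_left (by linarith)]; ring
      · rw [abs_of_nonneg (by linarith), max_eq_right (by linarith)]; ring
    simp only [habs, Finset.sum_add_distrib, Finset.sum_sub_distrib, hP1, hsum_q, δ,
      tvDistToUniform, ← Finset.mul_sum]
    ring
  -- Cauchy–Schwarz against the weights `2 P x + 4 q`, which sum to `6`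
  have hCS : (∑ x, |P x - q|) ^ 2 / ∑ x, (2 * P x + 4 * q) ≤
      ∑ x, |P x - q| ^ 2 / (2 * P x + 4 * q) :=
    Finset.sq_sum_div_le_sum_sq_div _ _ fun x _ => by linarith [hP0 x]
  have hweights : ∑ x, (2 * P x + 4 * q) = 6 := by
    rw [Finset.sum_add_distrib, ← Finset.mul_sum, ← Finset.mul_sum, hP1, hsum_q]
    norm_num
  have hlocal : ∑ x, |P x - q| ^ 2 / (2 * P x + 4 * q) ≤ (∑ x, q * klFun (P x / q)) / 3 := by
    rw [Finset.sum_div]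
    refine Finset.sum_le_sum fun x _ => ?_
    have := three_mul_sq_sub_div_le_mul_klFun (hP0 x) hq
    rw [sq_abs]
    linarith [mul_div_assoc 3 ((P x - q) ^ 2) (2 * P x + 4 * q)]
  rw [hL1, hweights] at hCS
  rw [hKL] at hlocal
  rw [H2_eq_sum_negMulLog, logb, mul_comm, ← mul_div_assoc, ← sub_div,
    div_le_div_iff_of_pos_right (log_pos one_lt_two)]
  linarith

lemma sum_div_card_sub_sum_mul_le (Q w : X → ℝ) (hw : ∀ x, 0 ≤ w x) :
    (∑ x, w x) / Fintype.card X - ∑ x, Q x * w x ≤ (⨆ x, w x) * tvDistToUniform Q := by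
  have hM : ∀ x, w x ≤ ⨆ y, w y := fun x => le_ciSup (Set.finite_range w).bddAbove x
  calc (∑ x, w x) / Fintype.card X - ∑ x, Q x * w x
      = ∑ x, ((Fintype.card X : ℝ)⁻¹ - Q x) * w x := by
        simp only [sub_mul, Finset.sum_sub_distrib, div_eq_inv_mul, Finset.mul_sum]
    _ ≤ ∑ x, max ((Fintype.card X : ℝ)⁻¹ - Q x) 0 * ⨆ y, w y :=
        Finset.sum_le_sum fun x _ =>
          (mul_le_mul_of_nonneg_right (le_max_left _ _) (hw x)).trans
            (mul_le_mul_of_nonneg_left (hM x) (le_max_right _ _))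
    _ = (⨆ x, w x) * tvDistToUniform Q := by rw [tvDistToUniform, ← Finset.sum_mul, mul_comm]

end FiniteDistributions

section Marginals

variable {I : Fin k → Type*} [∀ i, Fintype (I i)] [∀ i, DecidableEq (I i)]

lemma sum_marg_mul (P : (∀ i, I i) → ℝ) (i : Fin k) (w : I i → ℝ) :
    ∑ a, marg P i a * w a = ∑ α, P α * w (α i) := by
  simp only [marg, Finset.sum_mul, ite_mul, zero_mul]
  rw [Finset.sum_comm]
  simp

lemma IsProbDist.marg {P : (∀ i, I i) → ℝ} (hP : IsProbDist P) (i : Fin k) :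
    IsProbDist (marg P i) := by
  refine ⟨fun a => Finset.sum_nonneg fun α _ => ?_, ?_⟩
  · split_ifs
    exacts [hP.1 α, le_rfl]
  · simpa [hP.2] using sum_marg_mul P i 1

lemma Hw_nonneg {θ : Fin k → ℝ} (hθ : ∀ i, 0 ≤ θ i) {P : (∀ i, I i) → ℝ} (hP : IsProbDist P) :
    0 ≤ Hw θ P :=
  Finset.sum_nonneg fun i _ => mul_nonneg (hθ i) (hP.marg i).H2_nonneg

lemma HwSet_nonneg {θ : Fin k → ℝ} (hθ : ∀ i, 0 ≤ θ i) (Φ : Set (∀ i, I i)) :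
    0 ≤ HwSet θ Φ :=
  Real.sSup_nonneg <| by
    rintro _ ⟨P, hP, -, rfl⟩
    exact Hw_nonneg hθ hP

lemma HwSet_empty (θ : Fin k → ℝ) : HwSet θ (∅ : Set (∀ i, I i)) = 0 := by
  rw [HwSet]
  convert Real.sSup_empty
  refine Set.eq_empty_of_forall_notMem ?_
  rintro _ ⟨P, hP, hPΦ, -⟩
  have hP0 : ∀ α, P α = 0 := fun α => by_contra fun h => hPΦ α h
  simpa [hP0] using hP.2

end Marginals

section Restriction

variable {F : Type*} [Field F] {I J K : Fin k → Type*}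

@[simp]
lemma supp_zero : supp (0 : Tensor F I) = ∅ := by
  simp [supp]

lemma supp_nonempty {t : Tensor F I} (ht : t ≠ 0) : (supp t).Nonempty :=
  Function.ne_iff.mp ht

variable [∀ i, Fintype (I i)]

@[simp]
lemma restrictBy_zero (A : ∀ i, Matrix (I i) (J i) F) : restrictBy A (0 : Tensor F I) = 0 := by
  funext β
  simp [restrictBy]

@[simp]
lemma restrictBy_one [∀ i, DecidableEq (I i)] (t : Tensor F I) :
    restrictBy (fun i => (1 : Matrix (I i) (I i) F)) t = t := by
  funext β
  rw [restrictBy, Finset.sum_eq_single β]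
  · simp
  · intro α _ hne
    obtain ⟨i, hi⟩ := Function.ne_iff.mp hne
    rw [Finset.prod_eq_zero (Finset.mem_univ i) (by simp [hi]), zero_mul]
  · exact fun h => absurd (Finset.mem_univ β) h

lemma restrictBy_restrictBy [∀ i, Fintype (J i)] (A : ∀ i, Matrix (J i) (K i) F)
    (B : ∀ i, Matrix (I i) (J i) F) (t : Tensor F I) :
    restrictBy A (restrictBy B t) = restrictBy (fun i => B i * A i) t := by
  funext γ
  simp only [restrictBy, Finset.mul_sum, Matrix.mul_apply]
  rw [Finset.sum_comm]
  refine Finset.sum_congr rfl fun α _ => ?_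
  rw [Finset.prod_univ_sum, Fintype.piFinset_univ, Finset.sum_mul]
  refine Finset.sum_congr rfl fun β _ => ?_
  rw [Finset.prod_mul_distrib]
  ring

lemma restrictBy_ne_zero [∀ i, DecidableEq (I i)] {B : ∀ i, Matrix (I i) (I i) F}
    (hB : IsBasisTuple B) {t : Tensor F I} (ht : t ≠ 0) : restrictBy B t ≠ 0 := by
  intro h
  apply ht
  have hinv : (fun i => B i * (B i)⁻¹) = fun i => 1 :=
    funext fun i => Matrix.mul_nonsing_inv _ ((Matrix.isUnit_iff_isUnit_det _).mp (hB i))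
  have h' := congr_arg (restrictBy fun i => (B i)⁻¹) h
  rwa [restrictBy_restrictBy, hinv, restrictBy_one, restrictBy_zero] at h'

end Restriction

section Instability

variable {F : Type*} [Field F] {I : Fin k → Type*} [∀ i, Fintype (I i)]

/-- The condition on `(w, ε)` in the definition of `instab`, for the support `Φ`. -/
def IsInstabilityWitness (Φ : Set (∀ i, I i)) (w : ∀ i, I i → ℝ) (ε : ℝ) : Prop :=
  (∀ i x, 0 ≤ w i x) ∧ (∀ i, ∃ x, w i x ≠ 0) ∧
    ∀ a ∈ Φ, ∑ i, w i (a i) ≤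
      ∑ i, ((∑ x : I i, w i x) / (Fintype.card (I i) : ℝ) - ε * ⨆ x : I i, w i x)

variable [∀ i, DecidableEq (I i)]

def instabSet (t : Tensor F I) : Set ℝ :=
  {ε | 0 ≤ ε ∧ ∃ B : ∀ i, Matrix (I i) (I i) F, IsBasisTuple B ∧
    ∃ w, IsInstabilityWitness (supp (restrictBy B t)) w ε}

lemma instab_eq_sSup_instabSet (t : Tensor F I) : instab t = sSup (instabSet t) := rfl

lemma IsInstabilityWitness.exists_le_tvDistToUniform_marg [Nonempty (Fin k)]
    {Φ : Set (∀ i, I i)} {w : ∀ i, I i → ℝ} {ε : ℝ} (hw : IsInstabilityWitness Φ w ε)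
    {P : (∀ i, I i) → ℝ} (hP : IsProbDist P) (hPΦ : ∀ α, P α ≠ 0 → α ∈ Φ) :
    ∃ j, ε ≤ tvDistToUniform (marg P j) := by
  obtain ⟨hw0, hwne, hwΦ⟩ := hw
  set M : Fin k → ℝ := fun i => ⨆ x, w i x
  set avg : Fin k → ℝ := fun i => (∑ x, w i x) / Fintype.card (I i)
  have hMpos : ∀ i, 0 < M i := fun i => by
    obtain ⟨x, hx⟩ := hwne i
    exact (lt_of_le_of_ne (hw0 i x) hx.symm).trans_le
      (le_ciSup (Set.finite_range (w i)).bddAbove x)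
  have hmean : ∑ i, ∑ a, marg P i a * w i a ≤ ∑ i, (avg i - ε * M i) := calc
    ∑ i, ∑ a, marg P i a * w i a = ∑ α, P α * ∑ i, w i (α i) := by
      simp only [sum_marg_mul, Finset.mul_sum]
      exact Finset.sum_comm
    _ ≤ ∑ α, P α * ∑ i, (avg i - ε * M i) := Finset.sum_le_sum fun α _ => by
      by_cases h : P α = 0
      · simp [h]
      · exact mul_le_mul_of_nonneg_left (hwΦ α (hPΦ α h)) (hP.1 α)
    _ = ∑ i, (avg i - ε * M i) := by rw [← Finset.sum_mul, hP.2, one_mul]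
  have hgap : ∑ i, (avg i - ∑ a, marg P i a * w i a) ≤ ∑ i, M i * tvDistToUniform (marg P i) :=
    Finset.sum_le_sum fun i _ => sum_div_card_sub_sum_mul_le (marg P i) (w i) (hw0 i)
  by_contra! hfar
  have hlt : ∑ i, M i * tvDistToUniform (marg P i) < ∑ i, M i * ε :=
    Finset.sum_lt_sum_of_nonempty Finset.univ_nonempty fun i _ =>
      mul_lt_mul_of_pos_left (hfar i) (hMpos i)
  simp only [Finset.sum_sub_distrib, ← Finset.mul_sum, ← Finset.sum_mul] at hmean hgap hlt
  linarith

end Instability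

section Bound

open Real

variable {I : Fin k → Type*} [∀ i, Fintype (I i)] [∀ i, DecidableEq (I i)]

lemma Hw_le_of_le_tvDistToUniform_marg {θ : Fin k → ℝ} (hθ : ∀ i, 0 ≤ θ i)
    {P : (∀ i, I i) → ℝ} (hP : IsProbDist P) {ε : ℝ} (hε : 0 ≤ ε) {j : Fin k}
    (hj : ε ≤ tvDistToUniform (marg P j)) :
    Hw θ P ≤ ∑ i, θ i * logb 2 (Fintype.card (I i)) - 2 / log 2 * (⨅ i, θ i) * ε ^ 2 := by
  set δ : Fin k → ℝ := fun i => tvDistToUniform (marg P i)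
  have hc : 0 ≤ 2 / log 2 := div_nonneg zero_le_two (log_nonneg one_le_two)
  have hθδ : (⨅ i, θ i) * ε ^ 2 ≤ θ j * δ j ^ 2 :=
    mul_le_mul (ciInf_le (Set.finite_range θ).bddBelow j) (pow_le_pow_left₀ hε hj 2)
      (sq_nonneg ε) (hθ j)
  calc Hw θ P ≤ ∑ i, θ i * (logb 2 (Fintype.card (I i)) - 2 / log 2 * δ i ^ 2) :=
        Finset.sum_le_sum fun i _ =>
          mul_le_mul_of_nonneg_left (hP.marg i).H2_le_logb_card_sub_tvDistToUniform_sq (hθ i)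
    _ = ∑ i, θ i * logb 2 (Fintype.card (I i)) - 2 / log 2 * ∑ i, θ i * δ i ^ 2 := by
        rw [Finset.mul_sum, ← Finset.sum_sub_distrib]
        exact Finset.sum_congr rfl fun i _ => by ring
    _ ≤ ∑ i, θ i * logb 2 (Fintype.card (I i)) - 2 / log 2 * (θ j * δ j ^ 2) := by
        gcongr
        exact Finset.single_le_sum (fun i _ => mul_nonneg (hθ i) (sq_nonneg _))
          (Finset.mem_univ j)
    _ ≤ ∑ i, θ i * logb 2 (Fintype.card (I i)) - 2 / log 2 * (⨅ i, θ i) * ε ^ 2 := by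
        rw [mul_assoc]
        gcongr

lemma HwSet_le_of_isInstabilityWitness {θ : Fin k → ℝ} (hθ : IsProbDist θ)
    {Φ : Set (∀ i, I i)} (hΦ : Φ.Nonempty) {w : ∀ i, I i → ℝ} {ε : ℝ}
    (hw : IsInstabilityWitness Φ w ε) (hε : 0 ≤ ε) :
    HwSet θ Φ ≤ ∑ i, θ i * logb 2 (Fintype.card (I i)) - 2 / log 2 * (⨅ i, θ i) * ε ^ 2 := by
  have := hθ.nonempty
  obtain ⟨a, ha⟩ := hΦ
  refine csSup_le ⟨_, Pi.single a 1, isProbDist_single a, ?_, rfl⟩ ?_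
  · intro α hα
    obtain rfl : α = a := by_contra fun h => hα (Pi.single_eq_of_ne h 1)
    exact ha
  · rintro _ ⟨P, hP, hPΦ, rfl⟩
    obtain ⟨j, hj⟩ := hw.exists_le_tvDistToUniform_marg hP hPΦ
    exact Hw_le_of_le_tvDistToUniform_marg hθ.1 hP hε hj

variable {F : Type*} [Field F]

lemma rhoUpper_le_HwSet {θ : Fin k → ℝ} (hθ : ∀ i, 0 ≤ θ i) (t : Tensor F I)
    {B : ∀ i, Matrix (I i) (I i) F} (hB : IsBasisTuple B) :
    rhoUpper θ t ≤ HwSet θ (supp (restrictBy B t)) :=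
  csInf_le ⟨0, by rintro _ ⟨B, -, rfl⟩; exact HwSet_nonneg hθ _⟩ ⟨B, hB, rfl⟩

lemma rhoUpper_zero (θ : Fin k → ℝ) : rhoUpper θ (0 : Tensor F I) = 0 := by
  refine (congrArg sInf (Set.ext fun h => ?_)).trans (csInf_singleton (0 : ℝ))
  simp only [restrictBy_zero, supp_zero, HwSet_empty, Set.mem_singleton_iff]
  exact ⟨fun ⟨_, _, h⟩ => h, fun h => ⟨fun _ => 1, fun _ => isUnit_one, h⟩⟩

/-- `instabSet 0` is all of `[0, ∞)` or empty, and `sSup` is `0` in both cases. -/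
lemma instab_zero : instab (0 : Tensor F I) = 0 := by
  rw [instab_eq_sSup_instabSet]
  by_cases hI : ∀ i, Nonempty (I i)
  · refine Real.sSup_of_not_bddAbove fun ⟨b, hb⟩ => ?_
    have hmem : max b 0 + 1 ∈ instabSet (0 : Tensor F I) :=
      ⟨by positivity, fun _ => 1, fun _ => isUnit_one, fun _ _ => 1, fun _ _ => zero_le_one,
        fun i => ⟨Classical.choice (hI i), one_ne_zero⟩, by simp⟩
    linarith [hb hmem, le_max_left b 0]
  · obtain ⟨i, hi⟩ := not_forall.mp hI
    convert Real.sSup_empty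
    refine Set.eq_empty_of_forall_notMem fun ε ⟨_, _, _, w, hw⟩ => ?_
    obtain ⟨x, -⟩ := hw.2.1 i
    exact hi ⟨x⟩

lemma zero_mem_instabSet {t : Tensor F I} (ht : t ≠ 0) : 0 ∈ instabSet t := by
  obtain ⟨α, -⟩ := supp_nonempty ht
  have := fun i => Nonempty.intro (α i)
  refine ⟨le_rfl, fun _ => 1, fun _ => isUnit_one, fun _ _ => 1, fun _ _ => zero_le_one,
    fun i => ⟨α i, one_ne_zero⟩, fun a _ => ?_⟩
  simp [Fintype.card_ne_zero]

lemma mul_sq_le_sub_rhoUpper_of_mem_instabSet {θ : Fin k → ℝ} (hθ : IsProbDist θ)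
    {t : Tensor F I} (ht : t ≠ 0) {ε : ℝ} (hε : ε ∈ instabSet t) :
    2 / log 2 * (⨅ i, θ i) * ε ^ 2 ≤
      ∑ i, θ i * logb 2 (Fintype.card (I i)) - rhoUpper θ t := by
  obtain ⟨hε0, B, hB, w, hw⟩ := hε
  have hΦ := supp_nonempty (restrictBy_ne_zero hB ht)
  linarith [rhoUpper_le_HwSet hθ.1 t hB, HwSet_le_of_isInstabilityWitness hθ hΦ hw hε0]

theorem rhoUpper_le_sum_logb_card_sub_instab_sq {θ : Fin k → ℝ} (hθ : IsProbDist θ)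
    (t : Tensor F I) :
    rhoUpper θ t ≤ ∑ i, θ i * logb 2 (Fintype.card (I i)) -
      2 / log 2 * (⨅ i, θ i) * instab t ^ 2 := by
  rcases eq_or_ne t 0 with rfl | ht
  · rw [rhoUpper_zero, instab_zero, zero_pow two_ne_zero, mul_zero, sub_zero]
    exact Finset.sum_nonneg fun i _ => mul_nonneg (hθ.1 i)
      (div_nonneg (log_natCast_nonneg _) (log_nonneg one_le_two))
  · have hc : 0 ≤ 2 / log 2 * ⨅ i, θ i :=
      mul_nonneg (div_nonneg zero_le_two (log_nonneg one_le_two)) (Real.iInf_nonneg hθ.1)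
    have := mul_sq_csSup_le ⟨0, zero_mem_instabSet ht⟩ (fun ε hε => hε.1) hc
      fun ε hε => mul_sq_le_sub_rhoUpper_of_mem_instabSet hθ ht hε
    rw [← instab_eq_sSup_instabSet] at this
    linarith

end Bound

open Filter Topology

/-- the instability bound on the upper support functional. -/
theorem statement18 {k : ℕ} {F : Type*} [Field F] {n : Fin k → ℕ}
    (t : Tensor F fun i => Fin (n i)) (θ : Fin k → ℝ) (hθ : IsProbDist θ) :
    rhoUpper θ t ≤ ∑ i, θ i * Real.logb 2 (n i) -
      (2 / Real.log 2) * (⨅ i, θ i) * (instab t) ^ 2 := by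
  simpa using rhoUpper_le_sum_logb_card_sub_instab_sq hθ t

end CVZ

end
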